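/- Let $n \geq 3$ and let $L : (\mathbb{Z}/n\mathbb{Z})^d \to \{C, A, T\}$ be a labeling. Define an occurrence of CAT as a pair $(x, v)$ with $x \in (\mathbb{Z}/n\mathbb{Z})^d$, $v \in \{-1,0,1\}^d \setminus \{0\}$, such that $L(x) = C$, $L(x+v) = A$, $L(x+2v) = T$. Then the number of occurrences of CAT is at most $(3^{d-1}/2) n^d$. -/

import Mathlib

/-!
Let `s x = ±1` according to whether `x` is labelled `A`, and let `Q s = ∑ x, ∑ v, s x * s (x + v)`
be the adjacency form of the king's graph with loops on the torus, `v` ranging over `{-1, 0, 1}ᵈ`.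
Then `Q s = 3ᵈ nᵈ - 2 · #{(x, v) | exactly one of x, x + v is labelled A}`, and an occurrence
`(x, v)` of CAT yields four such pairs `(x, v)`, `(x + 2v, -v)`, `(x + v, v)`, `(x + v, -v)`, with
the distinct letter patterns CA, TA, AT, AC. Hence `8 · #CAT ≤ 3ᵈ nᵈ - Q s`.

With `S` the shift along one coordinate, `4 (I + S + S⁻¹) = 3 (I + S)ᵀ (I + S) - (I - S)ᵀ (I - S)`,
so induction on `d` (splitting off the first coordinate) confines the spectrum of the king's graph
to `[-3ᵈ⁻¹, 3ᵈ]`. In particular `Q s ≥ -3ᵈ⁻¹ nᵈ`, which gives `#CAT ≤ 3ᵈ⁻¹ nᵈ / 2`.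
-/

open Finset

inductive Letter | C | A | T
deriving DecidableEq

lemma Finset.sum_piFinset_const_succ {β M : Type*} [AddCommMonoid M] {d : ℕ} (S : Finset β)
    (φ : (Fin (d + 1) → β) → M) :
    ∑ v ∈ Fintype.piFinset (fun _ => S), φ v =
      ∑ s ∈ S, ∑ w ∈ Fintype.piFinset (fun _ => S), φ (Fin.cons s w) := by
  rw [← sum_product' (f := fun s w => φ (Fin.cons s w))]
  have := filter_piFinset_eq_map_consEquiv (fun _ : Fin (d + 1) => S) (fun _ => True)
  simp only [filter_true] at this
  rw [this, sum_map]
  rfl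

lemma sum_comp_add_right {G M : Type*} [AddGroup G] [Fintype G] [AddCommMonoid M] (φ : G → M)
    (a : G) : ∑ t, φ (t + a) = ∑ t, φ t :=
  Fintype.sum_equiv (Equiv.addRight a) _ _ fun _ => rfl

section Cayley

variable {X : Type*} [AddCommGroup X] [Fintype X]

def cayleyForm (D : Finset X) (f g : X → ℝ) : ℝ :=
  ∑ x, ∑ v ∈ D, f x * g (x + v)

lemma three_mul_cayleyForm_add_sub_cayleyForm_sub (D : Finset X) (f g : X → ℝ) :
    3 * cayleyForm D (f + g) (f + g) - cayleyForm D (f - g) (f - g) =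
      2 * cayleyForm D f f + 2 * cayleyForm D g g +
        4 * cayleyForm D f g + 4 * cayleyForm D g f := by
  simp only [cayleyForm, mul_sum, ← sum_sub_distrib, ← sum_add_distrib]
  refine sum_congr rfl fun x _ => sum_congr rfl fun v _ => ?_
  simp only [Pi.add_apply, Pi.sub_apply]
  ring

end Cayley

def consSlice {G : Type*} {d : ℕ} (f : (Fin (d + 1) → G) → ℝ) (t : G) : (Fin d → G) → ℝ :=
  fun y => f (Fin.cons t y)

lemma sum_eq_sum_consSlice {G : Type*} [Fintype G] {d : ℕ} (f : (Fin (d + 1) → G) → ℝ) :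
    ∑ x, f x = ∑ t, ∑ y, consSlice f t y := by
  simpa only [Fintype.piFinset_univ, consSlice] using sum_piFinset_const_succ univ f

lemma four_mul_sum_sq_eq_sum_consSlice {G : Type*} [AddGroup G] [Fintype G] {d : ℕ} (a : G)
    (f : (Fin (d + 1) → G) → ℝ) :
    4 * ∑ x, f x ^ 2 = ∑ t, (∑ y, (consSlice f t + consSlice f (t + a)) y ^ 2 +
      ∑ y, (consSlice f t - consSlice f (t + a)) y ^ 2) := by
  have hpar (t : G) : ∑ y, (consSlice f t + consSlice f (t + a)) y ^ 2 +
      ∑ y, (consSlice f t - consSlice f (t + a)) y ^ 2 =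
        2 * ∑ y, consSlice f t y ^ 2 + 2 * ∑ y, consSlice f (t + a) y ^ 2 := by
    simp only [Pi.add_apply, Pi.sub_apply, mul_sum, ← sum_add_distrib]
    exact sum_congr rfl fun y _ => by ring
  rw [sum_eq_sum_consSlice fun x => f x ^ 2]
  change 4 * ∑ t, ∑ y, consSlice f t y ^ 2 = _
  simp only [hpar, sum_add_distrib, ← mul_sum,
    sum_comp_add_right fun t => ∑ y, consSlice f t y ^ 2]
  ring

section KingMoves

variable {G : Type*} [AddCommGroup G] [DecidableEq G]

def kingMoves (a : G) (d : ℕ) : Finset (Fin d → G) :=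
  Fintype.piFinset fun _ => {0, a, -a}

variable {a : G} {d : ℕ}

lemma mem_kingMoves {v : Fin d → G} :
    v ∈ kingMoves a d ↔ ∀ j, v j = 0 ∨ v j = a ∨ v j = -a := by
  simp [kingMoves]

lemma neg_mem_kingMoves {v : Fin d → G} (hv : v ∈ kingMoves a d) : -v ∈ kingMoves a d := by
  rw [mem_kingMoves] at hv ⊢
  intro j
  rcases hv j with h | h | h <;> simp [h]

lemma card_kingMoves (ha : a ≠ -a) : #(kingMoves a d) = 3 ^ d := by
  have ha₀ : a ≠ 0 := by rintro rfl; exact ha neg_zero.symm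
  rw [kingMoves, Fintype.card_piFinset_const, card_insert_of_notMem (by simp [ha₀, ha₀.symm]),
    card_pair ha]

variable [Fintype G]

lemma cayleyForm_kingMoves_succ (f g : (Fin (d + 1) → G) → ℝ) :
    cayleyForm (kingMoves a (d + 1)) f g =
      ∑ t, ∑ s ∈ {0, a, -a}, cayleyForm (kingMoves a d) (consSlice f t) (consSlice g (t + s)) := by
  unfold cayleyForm
  rw [sum_eq_sum_consSlice]
  refine sum_congr rfl fun t _ => ?_
  simp only [consSlice, kingMoves, sum_piFinset_const_succ]
  rw [sum_comm]
  refine sum_congr rfl fun s _ => sum_congr rfl fun y _ => sum_congr rfl fun w _ => ?_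
  congr 2
  exact Matrix.cons_add_cons t y s w

lemma cayleyForm_kingMoves_succ_self (ha : a ≠ -a) (f : (Fin (d + 1) → G) → ℝ) :
    cayleyForm (kingMoves a (d + 1)) f f =
      ∑ t, (cayleyForm (kingMoves a d) (consSlice f t) (consSlice f t) +
        cayleyForm (kingMoves a d) (consSlice f t) (consSlice f (t + a)) +
        cayleyForm (kingMoves a d) (consSlice f (t + a)) (consSlice f t)) := by
  have ha₀ : a ≠ 0 := by rintro rfl; exact ha neg_zero.symm
  have hneg : ∑ t, cayleyForm (kingMoves a d) (consSlice f t) (consSlice f (t + -a)) =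
      ∑ t, cayleyForm (kingMoves a d) (consSlice f (t + a)) (consSlice f t) := by
    rw [← sum_comp_add_right _ a]
    simp
  rw [cayleyForm_kingMoves_succ, sum_add_distrib, sum_add_distrib, ← hneg, ← sum_add_distrib,
    ← sum_add_distrib]
  refine sum_congr rfl fun t _ => ?_
  rw [sum_insert (by simp [ha₀, ha₀.symm]), sum_insert (by simpa using ha), sum_singleton,
    add_zero, add_assoc]

lemma cayleyForm_kingMoves_zero (f : (Fin 0 → G) → ℝ) :
    cayleyForm (kingMoves a 0) f f = ∑ x, f x ^ 2 := by
  refine sum_congr rfl fun x _ => ?_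
  have hx (v : Fin 0 → G) : x + v = x := Subsingleton.elim _ _
  simp [kingMoves, hx, sq]

lemma four_mul_cayleyForm_kingMoves_succ (ha : a ≠ -a) (f : (Fin (d + 1) → G) → ℝ) :
    4 * cayleyForm (kingMoves a (d + 1)) f f =
      ∑ t, (3 * cayleyForm (kingMoves a d) (consSlice f t + consSlice f (t + a))
          (consSlice f t + consSlice f (t + a)) -
        cayleyForm (kingMoves a d) (consSlice f t - consSlice f (t + a))
          (consSlice f t - consSlice f (t + a))) := by
  simp only [three_mul_cayleyForm_add_sub_cayleyForm_sub, sum_add_distrib, ← mul_sum,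
    sum_comp_add_right fun t => cayleyForm (kingMoves a d) (consSlice f t) (consSlice f t),
    cayleyForm_kingMoves_succ_self ha]
  ring

theorem cayleyForm_kingMoves_bounds (ha : a ≠ -a) (f : (Fin d → G) → ℝ) :
    -3 ^ d * ∑ x, f x ^ 2 ≤ 3 * cayleyForm (kingMoves a d) f f ∧
      cayleyForm (kingMoves a d) f f ≤ 3 ^ d * ∑ x, f x ^ 2 := by
  induction d with
  | zero =>
    have := sum_nonneg fun x (_ : x ∈ univ) => sq_nonneg (f x)
    rw [cayleyForm_kingMoves_zero]
    constructor <;> linarith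
  | succ d ih =>
    have hslice (g h : (Fin d → G) → ℝ) :
        -3 ^ d * (∑ y, g y ^ 2 + ∑ y, h y ^ 2) ≤
            3 * cayleyForm (kingMoves a d) g g - cayleyForm (kingMoves a d) h h ∧
          3 * cayleyForm (kingMoves a d) g g - cayleyForm (kingMoves a d) h h ≤
            3 ^ (d + 1) * (∑ y, g y ^ 2 + ∑ y, h y ^ 2) := by
      have := ih g
      have := ih h
      have : 0 ≤ 3 ^ d * ∑ y, h y ^ 2 := by positivity
      rw [pow_succ]
      constructor <;> linarith
    have hlow := sum_le_sum fun t (_ : t ∈ univ) =>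
      (hslice (consSlice f t + consSlice f (t + a)) (consSlice f t - consSlice f (t + a))).1
    have hup := sum_le_sum fun t (_ : t ∈ univ) =>
      (hslice (consSlice f t + consSlice f (t + a)) (consSlice f t - consSlice f (t + a))).2
    rw [← mul_sum, ← four_mul_sum_sq_eq_sum_consSlice,
      ← four_mul_cayleyForm_kingMoves_succ ha] at hlow hup
    rw [pow_succ] at hup ⊢
    constructor <;> linarith

end KingMoves

def Letter.aSign (ℓ : Letter) : ℝ := if ℓ = .A then 1 else -1

lemma Letter.aSign_sq (ℓ : Letter) : ℓ.aSign ^ 2 = 1 := by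
  cases ℓ <;> norm_num [Letter.aSign]

lemma Letter.aSign_mul_aSign_add_le (ℓ ℓ' : Letter) :
    ℓ.aSign * ℓ'.aSign + 2 * ((if ℓ = .C ∧ ℓ' = .A then 1 else 0) +
      (if ℓ = .T ∧ ℓ' = .A then 1 else 0) + (if ℓ = .A ∧ ℓ' = .T then 1 else 0) +
      (if ℓ = .A ∧ ℓ' = .C then 1 else 0)) ≤ 1 := by
  cases ℓ <;> cases ℓ' <;> simp [Letter.aSign] <;> norm_num

section Occurrences

variable {X : Type*} [AddCommGroup X] [Fintype X] (D : Finset X) (L : X → Letter)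

def transitions (ℓ ℓ' : Letter) : Finset (X × X) :=
  (univ ×ˢ D).filter fun q => L q.1 = ℓ ∧ L (q.1 + q.2) = ℓ'

def catOccurrences : Finset (X × X) :=
  (univ ×ˢ D).filter fun q => L q.1 = .C ∧ L (q.1 + q.2) = .A ∧ L (q.1 + 2 • q.2) = .T

lemma card_transitions_comm (hD : ∀ v ∈ D, -v ∈ D) (ℓ ℓ' : Letter) :
    #(transitions D L ℓ ℓ') = #(transitions D L ℓ' ℓ) := by
  refine card_nbij' (fun q => (q.1 + q.2, -q.2)) (fun q => (q.1 + q.2, -q.2)) ?_ ?_ ?_ ?_ <;>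
    intro q hq
  all_goals simp_all [transitions]

lemma card_catOccurrences_le_transitions_C_A :
    #(catOccurrences D L) ≤ #(transitions D L .C .A) :=
  card_le_card fun q hq => by
    simp only [catOccurrences, transitions, mem_filter] at hq ⊢
    exact ⟨hq.1, hq.2.1, hq.2.2.1⟩

lemma card_catOccurrences_le_transitions_A_T :
    #(catOccurrences D L) ≤ #(transitions D L .A .T) := by
  refine card_le_card_of_injOn (fun q => (q.1 + q.2, q.2)) (fun q hq => ?_) ?_
  · simp only [catOccurrences, transitions, coe_filter, Set.mem_ofPred_eq,
      mem_product, mem_univ, true_and] at hq ⊢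
    rw [add_assoc, ← two_nsmul]
    exact ⟨hq.1, hq.2.2.1, hq.2.2.2⟩
  · rintro ⟨x, v⟩ - ⟨x', v'⟩ - h
    obtain ⟨hx, rfl⟩ : x + v = x' + v' ∧ v = v' := Prod.mk.inj h
    rw [add_right_cancel hx]

lemma cayleyForm_aSign_add_transitions_le :
    cayleyForm D (fun x => (L x).aSign) (fun x => (L x).aSign) +
      2 * ((#(transitions D L .C .A) : ℝ) + #(transitions D L .T .A) +
        #(transitions D L .A .T) + #(transitions D L .A .C)) ≤ Fintype.card X * #D := by
  simp only [cayleyForm, transitions, ← sum_boole, ← sum_product', mul_sum, ← sum_add_distrib]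
  calc _ ≤ ∑ _q ∈ univ ×ˢ D, (1 : ℝ) :=
        sum_le_sum fun q _ => Letter.aSign_mul_aSign_add_le _ _
    _ = _ := by simp [card_product]

lemma eight_mul_card_catOccurrences_le (hD : ∀ v ∈ D, -v ∈ D) :
    8 * (#(catOccurrences D L) : ℝ) ≤
      Fintype.card X * #D - cayleyForm D (fun x => (L x).aSign) (fun x => (L x).aSign) := by
  have hCA : (#(catOccurrences D L) : ℝ) ≤ #(transitions D L .C .A) := by
    exact_mod_cast card_catOccurrences_le_transitions_C_A D L
  have hAT : (#(catOccurrences D L) : ℝ) ≤ #(transitions D L .A .T) := by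
    exact_mod_cast card_catOccurrences_le_transitions_A_T D L
  have := cayleyForm_aSign_add_transitions_le D L
  rw [card_transitions_comm D L hD .T, card_transitions_comm D L hD .A .C] at this
  linarith

end Occurrences

theorem six_mul_card_catOccurrences_kingMoves_le {G : Type*} [AddCommGroup G] [Fintype G]
    [DecidableEq G] (a : G) (ha : a ≠ -a) (d : ℕ) (L : (Fin d → G) → Letter) :
    6 * (#(catOccurrences (kingMoves a d) L) : ℝ) ≤ 3 ^ d * Fintype.card G ^ d := by
  have hocc := eight_mul_card_catOccurrences_le (kingMoves a d) L fun _ => neg_mem_kingMoves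
  have hform := (cayleyForm_kingMoves_bounds ha fun x => (L x).aSign).1
  simp only [Letter.aSign_sq, sum_const, card_univ, Fintype.card_fun, Fintype.card_fin,
    nsmul_eq_mul, Nat.cast_pow] at hform
  simp only [card_kingMoves ha, Fintype.card_fun, Fintype.card_fin, Nat.cast_pow,
    Nat.cast_ofNat] at hocc
  linarith

theorem stmt_10 (n d : ℕ) [NeZero n] (hn : 3 ≤ n)
    (L : (Fin d → ZMod n) → Letter) :
    ((Finset.univ.filter
        (fun p : (Fin d → ZMod n) × (Fin d → ZMod n) =>
          (∀ j, p.2 j = 0 ∨ p.2 j = 1 ∨ p.2 j = -1) ∧ p.2 ≠ 0 ∧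
          L p.1 = Letter.C ∧ L (p.1 + p.2) = Letter.A ∧
          L (p.1 + 2 • p.2) = Letter.T)).card : ℝ)
      ≤ 3 ^ (d - 1) * n ^ d / 2 := by
  have : Fact (2 < n) := ⟨hn⟩
  have hocc := six_mul_card_catOccurrences_kingMoves_le (1 : ZMod n)
    ZMod.neg_one_ne_one.symm d L
  have hpow : (3 : ℝ) ^ d * n ^ d ≤ 3 * 3 ^ (d - 1) * n ^ d := by
    rw [← pow_succ']
    gcongr
    · norm_num
    · omega
  rw [ZMod.card] at hocc
  calc _ ≤ (#(catOccurrences (kingMoves (1 : ZMod n) d) L) : ℝ) := by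
        gcongr
        intro p hp
        simp only [mem_filter, catOccurrences, mem_product, mem_univ, true_and,
          mem_kingMoves] at hp ⊢
        exact ⟨hp.1, hp.2.2⟩
    _ ≤ 3 ^ (d - 1) * n ^ d / 2 := by linarith
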